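/- Suppose A satisfies the upper REC bound ‖A(x^{t+1} - x^t)‖² ≤ β‖x^{t+1} - x^t‖², the lower REC bound ‖x* - x^t‖² ≤ (1/γ)‖A(x* - x^t)‖², and the projection inequality L(x^{t+1}) + L(x^t) ≤ (1/η)‖x^t - x*‖² - (1/η)‖x^{t+1} - x^t‖² + ‖A(x^{t+1} - x^t)‖², where L(x) = ‖A(x - x*)‖² and ηβ < 1. Then L(x^{t+1}) ≤ (1/(ηγ) - 1) L(x^t). -/
import Mathlib


/-- combining upper/lower REC bounds with the projection
inequality to get loss contraction `L(x^{t+1}) ≤ (1/(ηγ) - 1) L(x^t)`. -/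
theorem stmt_6 {n d : ℕ} (A : Matrix (Fin n) (Fin d) ℝ)
    (xs xt xt1 : EuclideanSpace ℝ (Fin d)) (γ β η : ℝ)
    (hγ : 0 < γ) (hβ : 0 < β) (hη : 0 < η) (hηβ : η * β < 1)
    (hupper : ‖Matrix.toEuclideanLin A (xt1 - xt)‖ ^ 2 ≤ β * ‖xt1 - xt‖ ^ 2)
    (hlower : ‖xs - xt‖ ^ 2 ≤ (1 / γ) * ‖Matrix.toEuclideanLin A (xs - xt)‖ ^ 2)
    (hproj : ‖Matrix.toEuclideanLin A (xt1 - xs)‖ ^ 2 +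
        ‖Matrix.toEuclideanLin A (xt - xs)‖ ^ 2 ≤
      (1 / η) * ‖xt - xs‖ ^ 2 - (1 / η) * ‖xt1 - xt‖ ^ 2 +
        ‖Matrix.toEuclideanLin A (xt1 - xt)‖ ^ 2) :
    ‖Matrix.toEuclideanLin A (xt1 - xs)‖ ^ 2 ≤
      (1 / (η * γ) - 1) * ‖Matrix.toEuclideanLin A (xt - xs)‖ ^ 2 := by
  have h1 : ‖(Matrix.toEuclideanLin A) (xs - xt)‖ = ‖(Matrix.toEuclideanLin A) (xt - xs)‖ := by
    rw [map_sub, map_sub, norm_sub_rev]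
  have h2 : ‖xs - xt‖ = ‖xt - xs‖ := norm_sub_rev _ _
  have hβη : β ≤ 1 / η := by
    rw [le_div_iff₀ hη]; nlinarith
  have h3 : ‖(Matrix.toEuclideanLin A) (xt1 - xt)‖ ^ 2 ≤ (1/η) * ‖xt1 - xt‖ ^ 2 := by
    calc _ ≤ β * ‖xt1 - xt‖ ^ 2 := hupper
    _ ≤ (1/η) * ‖xt1 - xt‖ ^ 2 := by nlinarith [sq_nonneg ‖xt1 - xt‖]
  have h4 : ‖xt - xs‖ ^ 2 ≤ (1 / γ) * ‖(Matrix.toEuclideanLin A) (xt - xs)‖ ^ 2 := by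
    rw [← h1, ← h2]; exact hlower
  have hηγ : 1 / (η * γ) = (1/η) * (1/γ) := by field_simp
  rw [hηγ]
  nlinarith [one_div_pos.mpr hη]
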